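/- arXiv:2106.07836 — 2 statements merged into one kernel-verified Lean document; each statement's English description precedes it below -/
import Mathlib

section
/- Let f: K → ℝ be twice continuously differentiable on a convex set K ⊂ ℝ₊ⁿ. If for all x ∈ K, the diagonal Hessian entries satisfy ∂²f/∂xᵢ²(x) ≤ -μ for all i, and the off-diagonal entries satisfy ∂²f/∂xᵢ∂xⱼ(x) ≤ 0 for all i ≠ j, then for all x ∈ K and all v ⪰ 0 with x+v ∈ K, f(x+v) ≤ f(x) + ⟨∇f(x), v⟩ - (μ/2)‖v‖₂². -/
/-!
Restrict `f` to the segment `t ↦ x + t • v`. Its second derivative `H (x + t • v) v v` expands as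
`∑ i j, v i * v j * H_ij`; since `v ⪰ 0`, the off-diagonal terms are `≤ 0` and the diagonal ones
are `≤ -μ * v i ^ 2`, so the second derivative is at most `-μ * ‖v‖₂²`. Comparing derivatives twice
on `[0, 1]` gives the second-order Taylor bound.
-/

open Finset Set

theorem ContinuousLinearMap.apply_apply_eq_sum_sum {ι : Type*} [Fintype ι] [DecidableEq ι]
    (B : (ι → ℝ) →L[ℝ] (ι → ℝ) →L[ℝ] ℝ) (u v : ι → ℝ) :
    B u v = ∑ i, ∑ j, u i * v j * B (Pi.single i 1) (Pi.single j 1) := by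
  conv_lhs => rw [pi_eq_sum_univ' u, pi_eq_sum_univ' v]
  simp only [map_sum, _root_.sum_apply, map_smul, smul_apply, smul_eq_mul, mul_sum]
  rw [sum_comm]
  exact sum_congr rfl fun i _ => sum_congr rfl fun j _ => by ring

theorem ContinuousLinearMap.apply_self_le_of_diag_le_of_offDiag_nonpos {ι : Type*} [Fintype ι]
    [DecidableEq ι] (B : (ι → ℝ) →L[ℝ] (ι → ℝ) →L[ℝ] ℝ) {μ : ℝ}
    (hdiag : ∀ i, B (Pi.single i 1) (Pi.single i 1) ≤ -μ)
    (hoff : ∀ i j, i ≠ j → B (Pi.single i 1) (Pi.single j 1) ≤ 0)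
    {v : ι → ℝ} (hv : ∀ i, 0 ≤ v i) :
    B v v ≤ -μ * ∑ i, v i ^ 2 := by
  rw [B.apply_apply_eq_sum_sum, mul_sum]
  refine sum_le_sum fun i _ => ?_
  rw [← sum_ite_eq_of_mem' univ i (fun _ => -μ * v i ^ 2) (mem_univ i)]
  refine sum_le_sum fun j _ => ?_
  split_ifs with hij
  · subst hij
    nlinarith [hdiag j, mul_nonneg (hv j) (hv j)]
  · exact mul_nonpos_of_nonneg_of_nonpos (mul_nonneg (hv i) (hv j)) (hoff i j (Ne.symm hij))

theorem sub_le_sub_of_hasDerivWithinAt_le {a b : ℝ} {g g' h h' : ℝ → ℝ}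
    (hg : ∀ t ∈ Icc a b, HasDerivWithinAt g (g' t) (Icc a b) t)
    (hh : ∀ t ∈ Icc a b, HasDerivWithinAt h (h' t) (Icc a b) t)
    (hle : ∀ t ∈ Ioo a b, g' t ≤ h' t) {t : ℝ} (ht : t ∈ Icc a b) :
    g t - g a ≤ h t - h a := by
  have hd : ∀ t ∈ Icc a b, HasDerivWithinAt (h - g) (h' t - g' t) (Icc a b) t :=
    fun t ht => (hh t ht).sub (hg t ht)
  have hmono : MonotoneOn (h - g) (Icc a b) := by
    refine monotoneOn_of_hasDerivWithinAt_nonneg (convex_Icc a b)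
      (fun t ht => (hd t ht).continuousWithinAt)
      (fun t ht => (hd t (interior_subset ht)).mono interior_subset) fun t ht => ?_
    rw [interior_Icc] at ht
    exact sub_nonneg.2 (hle t ht)
  have := hmono (left_mem_Icc.2 (ht.1.trans ht.2)) ht ht.1
  simp only [Pi.sub_apply] at this
  linarith

theorem le_add_mul_add_sq_of_hasDerivWithinAt_le {a b c : ℝ} (hab : a ≤ b) {g g' g'' : ℝ → ℝ}
    (hg : ∀ t ∈ Icc a b, HasDerivWithinAt g (g' t) (Icc a b) t)
    (hg' : ∀ t ∈ Icc a b, HasDerivWithinAt g' (g'' t) (Icc a b) t)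
    (hg'' : ∀ t ∈ Ioo a b, g'' t ≤ c) :
    g b ≤ g a + g' a * (b - a) + c / 2 * (b - a) ^ 2 := by
  have hslope : ∀ t ∈ Icc a b, g' t ≤ g' a + c * (t - a) := by
    intro t ht
    have := sub_le_sub_of_hasDerivWithinAt_le (h := fun t => c * t) (h' := fun _ => c) hg'
      (fun t _ => by simpa using (hasDerivWithinAt_id t _).const_mul c) hg'' ht
    linarith
  have hq : ∀ t ∈ Icc a b, HasDerivWithinAt (fun t => g' a * t + c / 2 * (t - a) ^ 2)
      (g' a + c * (t - a)) (Icc a b) t := by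
    intro t _
    refine HasDerivWithinAt.congr_deriv (((hasDerivAt_id' t).const_mul (g' a)).add
      ((((hasDerivAt_id' t).sub_const a).fun_pow 2).const_mul (c / 2))).hasDerivWithinAt ?_
    push_cast
    ring
  have := sub_le_sub_of_hasDerivWithinAt_le hg hq (fun t ht => hslope t (Ioo_subset_Icc_self ht))
    (right_mem_Icc.2 hab)
  linarith

theorem Convex.hasDerivWithinAt_comp_add_smul {E F : Type*} [NormedAddCommGroup E]
    [NormedSpace ℝ E] [NormedAddCommGroup F] [NormedSpace ℝ F] {K : Set E} (hK : Convex ℝ K)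
    {g : E → F} {g' : E → E →L[ℝ] F} (hg : ∀ y ∈ K, HasFDerivWithinAt g (g' y) K y)
    {x v : E} (hx : x ∈ K) (hxv : x + v ∈ K) {t : ℝ} (ht : t ∈ Icc (0 : ℝ) 1) :
    HasDerivWithinAt (fun t : ℝ => g (x + t • v)) (g' (x + t • v) v) (Icc 0 1) t := by
  have hline : HasDerivAt (fun t : ℝ => x + t • v) v t := by
    simpa using ((hasDerivAt_id t).smul_const v).const_add x
  exact (hg _ (hK.add_smul_mem hx hxv ht)).comp_hasDerivWithinAt t hline.hasDerivWithinAt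
    fun s hs => hK.add_smul_mem hx hxv hs

theorem stmt_0_general (n : ℕ) (K : Set (Fin n → ℝ)) (hKconv : Convex ℝ K)
    (μ : ℝ)
    (f : (Fin n → ℝ) → ℝ)
    (f' : (Fin n → ℝ) → (Fin n → ℝ) →L[ℝ] ℝ)
    (H : (Fin n → ℝ) → (Fin n → ℝ) →L[ℝ] (Fin n → ℝ) →L[ℝ] ℝ)
    (hf' : ∀ x ∈ K, HasFDerivWithinAt f (f' x) K x)
    (hH : ∀ x ∈ K, HasFDerivWithinAt f' (H x) K x)
    (hdiag : ∀ x ∈ K, ∀ i, H x (Pi.single i 1) (Pi.single i 1) ≤ -μ)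
    (hoff : ∀ x ∈ K, ∀ i j, i ≠ j → H x (Pi.single i 1) (Pi.single j 1) ≤ 0) :
    ∀ x ∈ K, ∀ v : Fin n → ℝ, (∀ i, 0 ≤ v i) → x + v ∈ K →
      f (x + v) ≤ f x + f' x v - μ / 2 * ∑ i, (v i) ^ 2 := by
  intro x hx v hv hxv
  have hseg : ∀ t ∈ Icc (0 : ℝ) 1, x + t • v ∈ K := fun t ht => hKconv.add_smul_mem hx hxv ht
  have hslope : ∀ t ∈ Icc (0 : ℝ) 1, HasDerivWithinAt (fun t : ℝ => f' (x + t • v) v)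
      (H (x + t • v) v v) (Icc 0 1) t := fun t ht =>
    (ContinuousLinearMap.apply ℝ ℝ v).hasFDerivAt.comp_hasDerivWithinAt t
      (hKconv.hasDerivWithinAt_comp_add_smul hH hx hxv ht)
  have hcurv : ∀ t ∈ Ioo (0 : ℝ) 1, H (x + t • v) v v ≤ -μ * ∑ i, v i ^ 2 := fun t ht =>
    (H _).apply_self_le_of_diag_le_of_offDiag_nonpos
      (hdiag _ (hseg t (Ioo_subset_Icc_self ht))) (hoff _ (hseg t (Ioo_subset_Icc_self ht))) hv
  have htaylor := le_add_mul_add_sq_of_hasDerivWithinAt_le zero_le_one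
    (fun t ht => hKconv.hasDerivWithinAt_comp_add_smul hf' hx hxv ht) hslope hcurv
  simp only [zero_smul, add_zero, one_smul, sub_zero, one_pow, mul_one] at htaylor
  linarith

/-- Twice differentiable function with diagonal Hessian entries ≤ -μ and non-positive
off-diagonal Hessian entries is μ-strongly DR-submodular w.r.t. the Euclidean norm. -/
theorem stmt_0 (n : ℕ) (K : Set (Fin n → ℝ)) (hKconv : Convex ℝ K)
    (hKpos : ∀ x ∈ K, ∀ i, 0 ≤ x i) (μ : ℝ) (hμ : 0 ≤ μ)
    (f : (Fin n → ℝ) → ℝ)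
    (f' : (Fin n → ℝ) → (Fin n → ℝ) →L[ℝ] ℝ)
    (H : (Fin n → ℝ) → (Fin n → ℝ) →L[ℝ] (Fin n → ℝ) →L[ℝ] ℝ)
    (hf' : ∀ x ∈ K, HasFDerivWithinAt f (f' x) K x)
    (hH : ∀ x ∈ K, HasFDerivWithinAt f' (H x) K x)
    (hHcont : ContinuousOn H K)
    (hdiag : ∀ x ∈ K, ∀ i, H x (Pi.single i 1) (Pi.single i 1) ≤ -μ)
    (hoff : ∀ x ∈ K, ∀ i j, i ≠ j → H x (Pi.single i 1) (Pi.single j 1) ≤ 0) :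
    ∀ x ∈ K, ∀ v : Fin n → ℝ, (∀ i, 0 ≤ v i) → x + v ∈ K →
      f (x + v) ≤ f x + f' x v - μ / 2 * ∑ i, (v i) ^ 2 :=
  stmt_0_general n K hKconv μ f f' H hf' hH hdiag hoff
end

section
/- Let f: ℝ₊ⁿ → ℝ be differentiable, monotone with respect to the coordinate-wise order, and satisfy the μ-strong DR-submodularity property: f(x+v) ≤ f(x) + ⟨∇f(x), v⟩ - (μ/2)‖v‖² for all x and v ⪰ 0 in the domain. Then for any x, x* in the domain, f(x*) - f(x) ≤ ⟨x*, ∇f(x)⟩ - (μ/2)‖x*‖². -/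
open Matrix Finset

/-- For a monotone μ-strongly DR-submodular function (w.r.t. a norm `N`),
`f(x*) - f(x) ≤ ⟨x*, ∇f(x)⟩ - (μ/2)‖x*‖²`. -/
theorem stmt_3 (n : ℕ) (μ : ℝ) (hμ : 0 ≤ μ)
    (f : (Fin n → ℝ) → ℝ) (g : (Fin n → ℝ) → (Fin n → ℝ)) (N : (Fin n → ℝ) → ℝ)
    (hmono : ∀ x y : Fin n → ℝ, (∀ i, 0 ≤ x i) → (∀ i, x i ≤ y i) → f x ≤ f y)
    (hstrong : ∀ x v : Fin n → ℝ, (∀ i, 0 ≤ x i) → (∀ i, 0 ≤ v i) →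
      f (x + v) ≤ f x + g x ⬝ᵥ v - μ / 2 * (N v) ^ 2)
    (x xs : Fin n → ℝ) (hx : ∀ i, 0 ≤ x i) (hxs : ∀ i, 0 ≤ xs i) :
    f xs - f x ≤ xs ⬝ᵥ g x - μ / 2 * (N xs) ^ 2 := by
  have h1 : f xs ≤ f (x + xs) := by
    apply hmono _ _ hxs
    intro i
    simpa using hx i
  have h2 := hstrong x xs hx hxs
  rw [dotProduct_comm]
  linarith
end
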